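/- arXiv:1401.2142 — 8 statements merged into one kernel-verified Lean document; each statement's English description precedes it below -/
import Mathlib

section
/- Let m ≥ 1 be an integer, set M = 2^m − 1, and let t = arcsin(√((M+1)/(2M))). Let H₂ = (1/√2)·[[1,1],[1,−1]] be the Hadamard matrix and let H = H₂^{⊗m} be its m-fold Kronecker power, a Hermitian unitary 2^m × 2^m matrix. Then the matrix V = exp(−i t H) is unitary, its (0,0) entry satisfies |V₀₀|² = 1/2, and for every index j ≠ 0 in the first column, |V_{j0}|² = 1/(2M). -/
/-!
`H = H₂^{⊗m}` is a Hermitian involution, so `exp (-i t H) = cos t • 1 - (i sin t) • H`, and it is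
unitary as the exponential of a skew-Hermitian matrix. Every entry of the `0`-th column of `H` is
`2^{-m/2}`, so `|V₀₀|² = cos² t + sin² t / 2^m` and `|V_{j0}|² = sin² t / 2^m`; finally
`sin² t = (M + 1) / (2M)` and `2^m = M + 1`.
-/

/-- The Hadamard matrix `H₂ = (1/√2)·[[1,1],[1,−1]]`. -/
noncomputable def hadamard2 : Matrix (Fin 2) (Fin 2) ℂ :=
  ((Real.sqrt 2 : ℂ))⁻¹ • !![1, 1; 1, -1]

/-- The `m`-fold Kronecker power of the Hadamard matrix, indexed by `m`-tuples of bits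
(with `fun _ => 0` the all-zeros index playing the role of the index `0`). -/
noncomputable def hadamardPow (m : ℕ) : Matrix (Fin m → Fin 2) (Fin m → Fin 2) ℂ :=
  fun x y => ∏ i : Fin m, hadamard2 (x i) (y i)

open NormedSpace

section Involution

variable {A : Type*} [NormedRing A] [NormedAlgebra ℂ A] [Algebra ℚ A]

/-- `(a, b) ↦ a • (1 + H) / 2 + b • (1 - H) / 2`; it is multiplicative because `(1 ± H) / 2` are
complementary orthogonal idempotents. -/
noncomputable def prodAlgHomOfMulSelfEqOne (H : A) (hH : H * H = 1) : ℂ × ℂ →ₐ[ℂ] A where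
  toFun p := ((p.1 + p.2) / 2) • 1 + ((p.1 - p.2) / 2) • H
  map_one' := by simp
  map_mul' p q := by
    simp only [Prod.fst_mul, Prod.snd_mul, add_mul, mul_add, smul_mul_assoc, mul_smul_comm,
      one_mul, mul_one, hH]
    module
  map_zero' := by simp
  map_add' p q := by simp only [Prod.fst_add, Prod.snd_add]; module
  commutes' r := by simp [Algebra.algebraMap_eq_smul_one]

theorem exp_smul_of_mul_self_eq_one {H : A} (hH : H * H = 1) (c : ℂ) :
    exp (c • H) = Complex.cosh c • (1 : A) + Complex.sinh c • H := by
  set ψ := prodAlgHomOfMulSelfEqOne H hH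
  have hψ : Continuous ψ := by
    show Continuous fun p : ℂ × ℂ => ((p.1 + p.2) / 2) • (1 : A) + ((p.1 - p.2) / 2) • H
    fun_prop
  have hc : ψ (c, -c) = c • H := by
    show ((c + -c) / 2) • (1 : A) + ((c - -c) / 2) • H = c • H
    module
  have hexp : exp (c, -c) = (Complex.exp c, Complex.exp (-c)) := by
    ext <;> simp [Prod.fst_exp, Prod.snd_exp, Complex.exp_eq_exp_ℂ]
  rw [← hc, ← map_exp ψ hψ, hexp, Complex.cosh, Complex.sinh]
  rfl

end Involution

namespace Matrix

variable {ι l n p R : Type*} [Fintype ι]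

variable (ι) in
def kroneckerPow [CommMonoid R] (A : Matrix l n R) : Matrix (ι → l) (ι → n) R :=
  fun x y => ∏ i, A (x i) (y i)

theorem kroneckerPow_mul [DecidableEq ι] [Fintype n] [CommSemiring R] (A : Matrix l n R)
    (B : Matrix n p R) : kroneckerPow ι A * kroneckerPow ι B = kroneckerPow ι (A * B) := by
  ext x y
  simp only [mul_apply, kroneckerPow, ← Finset.prod_mul_distrib]
  exact (Fintype.prod_sum fun i z => A (x i) z * B z (y i)).symm

theorem kroneckerPow_one [DecidableEq n] [CommSemiring R] :
    kroneckerPow ι (1 : Matrix n n R) = 1 := by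
  ext x y
  by_cases h : x = y
  · subst h; simp [kroneckerPow]
  · obtain ⟨i, hi⟩ := Function.ne_iff.mp h
    rw [one_apply_ne h]
    exact Finset.prod_eq_zero (Finset.mem_univ i) (one_apply_ne hi)

theorem kroneckerPow_conjTranspose [CommSemiring R] [StarRing R] (A : Matrix l n R) :
    (kroneckerPow ι A)ᴴ = kroneckerPow ι Aᴴ := by
  ext x y
  simp [kroneckerPow, star_prod]

section Exponential

variable [Fintype n] [DecidableEq n]

theorem exp_smul_of_mul_self_eq_one {H : Matrix n n ℂ}
    (hH : H * H = 1) (c : ℂ) :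
    exp (c • H) = Complex.cosh c • (1 : Matrix n n ℂ) + Complex.sinh c • H := by
  let : NormedRing (Matrix n n ℂ) := Matrix.linftyOpNormedRing
  let : NormedAlgebra ℂ (Matrix n n ℂ) := Matrix.linftyOpNormedAlgebra
  exact _root_.exp_smul_of_mul_self_eq_one hH c

theorem exp_neg_I_mul_smul_of_mul_self_eq_one {H : Matrix n n ℂ}
    (hH : H * H = 1) (t : ℝ) :
    exp (-(Complex.I * t) • H)
      = (Real.cos t : ℂ) • (1 : Matrix n n ℂ) - (Real.sin t * Complex.I) • H := by
  rw [exp_smul_of_mul_self_eq_one hH, show -(Complex.I * t) = (-t : ℂ) * Complex.I by ring,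
    Complex.cosh_mul_I, Complex.sinh_mul_I, Complex.cos_neg, Complex.sin_neg, Complex.ofReal_cos,
    Complex.ofReal_sin, neg_mul, neg_smul, sub_eq_add_neg]

theorem exp_mem_unitaryGroup_of_mem_skewAdjoint {A : Matrix n n ℂ}
    (hA : A ∈ skewAdjoint (Matrix n n ℂ)) : exp A ∈ unitaryGroup n ℂ := by
  rw [mem_unitaryGroup_iff', star_eq_conjTranspose, ← exp_conjTranspose, ← star_eq_conjTranspose,
    skewAdjoint.mem_iff.mp hA, exp_neg]
  exact nonsing_inv_mul _ ((isUnit_iff_isUnit_det _).mp (isUnit_exp A))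

theorem exp_neg_I_mul_smul_mem_unitaryGroup {H : Matrix n n ℂ}
    (hH : H.IsHermitian) (t : ℝ) : exp (-(Complex.I * t) • H) ∈ unitaryGroup n ℂ := by
  refine exp_mem_unitaryGroup_of_mem_skewAdjoint (IsSelfAdjoint.smul_mem_skewAdjoint ?_ hH)
  simp [skewAdjoint.mem_iff]

end Exponential

end Matrix

open Matrix

theorem hadamard2_mul_self : hadamard2 * hadamard2 = 1 := by
  have h : ((Real.sqrt 2 : ℂ))⁻¹ * ((Real.sqrt 2 : ℂ))⁻¹ = 2⁻¹ := by
    rw [← mul_inv, ← Complex.ofReal_mul, Real.mul_self_sqrt zero_le_two, Complex.ofReal_ofNat]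
  rw [hadamard2, smul_mul_smul_comm, h]
  ext i j
  fin_cases i <;> fin_cases j <;> simp <;> norm_num

theorem hadamard2_isHermitian : hadamard2.IsHermitian := by
  ext i j
  fin_cases i <;> fin_cases j <;> simp [hadamard2, Complex.conj_ofReal]

theorem hadamard2_apply_zero (a : Fin 2) : hadamard2 a 0 = ((Real.sqrt 2 : ℂ))⁻¹ := by
  fin_cases a <;> simp [hadamard2]

theorem hadamardPow_eq_kroneckerPow (m : ℕ) :
    hadamardPow m = kroneckerPow (Fin m) hadamard2 := rfl

theorem hadamardPow_mul_self (m : ℕ) : hadamardPow m * hadamardPow m = 1 := by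
  rw [hadamardPow_eq_kroneckerPow, kroneckerPow_mul, hadamard2_mul_self, kroneckerPow_one]

theorem hadamardPow_isHermitian (m : ℕ) : (hadamardPow m).IsHermitian := by
  rw [IsHermitian, hadamardPow_eq_kroneckerPow, kroneckerPow_conjTranspose,
    hadamard2_isHermitian.eq]

theorem hadamardPow_apply_zero (m : ℕ) (j : Fin m → Fin 2) :
    hadamardPow m j (fun _ => 0) = ((Real.sqrt 2)⁻¹ ^ m : ℝ) := by
  simp [hadamardPow, hadamard2_apply_zero]

theorem exp_hadamardPow_apply_zero (m : ℕ) (t : ℝ) (j : Fin m → Fin 2) :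
    exp (-(Complex.I * t) • hadamardPow m) j (fun _ => 0)
      = (Real.cos t : ℂ) * (1 : Matrix (Fin m → Fin 2) (Fin m → Fin 2) ℂ) j (fun _ => 0)
        + (-(Real.sin t * (Real.sqrt 2)⁻¹ ^ m) : ℝ) * Complex.I := by
  rw [exp_neg_I_mul_smul_of_mul_self_eq_one (hadamardPow_mul_self m)]
  simp only [Matrix.sub_apply, Matrix.smul_apply, smul_eq_mul, hadamardPow_apply_zero]
  push_cast
  ring

theorem sq_inv_sqrt_two_pow (m : ℕ) : ((Real.sqrt 2)⁻¹ ^ m) ^ 2 = (2 ^ m)⁻¹ := by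
  rw [← pow_mul, mul_comm, pow_mul, inv_pow, Real.sq_sqrt zero_le_two, inv_pow]

theorem norm_sq_exp_hadamardPow_apply_zero_zero (m : ℕ) (t : ℝ) :
    ‖exp (-(Complex.I * t) • hadamardPow m) (fun _ => 0) (fun _ => 0)‖ ^ 2
      = Real.cos t ^ 2 + Real.sin t ^ 2 / 2 ^ m := by
  rw [exp_hadamardPow_apply_zero, one_apply_eq, mul_one, Complex.sq_norm,
    Complex.normSq_add_mul_I, neg_sq, mul_pow, sq_inv_sqrt_two_pow, div_eq_mul_inv]

theorem norm_sq_exp_hadamardPow_apply_zero_of_ne (m : ℕ) (t : ℝ) {j : Fin m → Fin 2}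
    (hj : j ≠ fun _ => 0) :
    ‖exp (-(Complex.I * t) • hadamardPow m) j (fun _ => 0)‖ ^ 2 = Real.sin t ^ 2 / 2 ^ m := by
  rw [exp_hadamardPow_apply_zero, one_apply_ne hj, mul_zero, zero_add, norm_mul, Complex.norm_I,
    mul_one, Complex.norm_real, Real.norm_eq_abs, sq_abs, neg_sq, mul_pow, sq_inv_sqrt_two_pow,
    div_eq_mul_inv]

theorem sin_arcsin_sqrt_sq {x : ℝ} (h0 : 0 ≤ x) (h1 : x ≤ 1) :
    Real.sin (Real.arcsin (Real.sqrt x)) ^ 2 = x := by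
  rw [Real.sin_arcsin (by linarith [Real.sqrt_nonneg x]) (Real.sqrt_le_one.mpr h1),
    Real.sq_sqrt h0]

/-- With `M = 2^m − 1` and `t = arcsin √((M+1)/(2M))`, the matrix `V = exp(−i t H₂^{⊗m})`
is unitary, `|V₀₀|² = 1/2`, and `|V_{j0}|² = 1/(2M)` for every `j ≠ 0`. -/
theorem stmt_1 (m : ℕ) (hm : 1 ≤ m) (M : ℕ) (hM : M = 2 ^ m - 1)
    (t : ℝ) (ht : t = Real.arcsin (Real.sqrt ((M + 1) / (2 * M))))
    (V : Matrix (Fin m → Fin 2) (Fin m → Fin 2) ℂ)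
    (hV : V = NormedSpace.exp ((-(Complex.I * (t : ℂ))) • hadamardPow m)) :
    V ∈ Matrix.unitaryGroup (Fin m → Fin 2) ℂ ∧
    ‖V (fun _ => 0) (fun _ => 0)‖^2 = 1 / 2 ∧
    ∀ j : Fin m → Fin 2, j ≠ (fun _ => 0) →
      ‖V j (fun _ => 0)‖^2 = 1 / (2 * M) := by
  have hM1 : (1 : ℝ) ≤ M := by
    have : 2 ≤ 2 ^ m := Nat.le_self_pow (by omega) 2
    exact_mod_cast (by omega : 1 ≤ M)
  have h2m : (2 : ℝ) ^ m = M + 1 := by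
    rw [hM, Nat.cast_sub Nat.one_le_two_pow]
    push_cast
    ring
  have hsin : Real.sin t ^ 2 = (M + 1) / (2 * M) := by
    rw [ht]
    exact sin_arcsin_sqrt_sq (by positivity) ((div_le_one (by positivity)).mpr (by linarith))
  subst hV
  refine ⟨exp_neg_I_mul_smul_mem_unitaryGroup (hadamardPow_isHermitian m) t, ?_, fun j hj => ?_⟩
  · rw [norm_sq_exp_hadamardPow_apply_zero_zero, Real.cos_sq', hsin, h2m]
    field_simp
    ring
  · rw [norm_sq_exp_hadamardPow_apply_zero_of_ne m t hj, hsin, h2m]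
    field_simp
end

section
/- Let φ and ψ be unit vectors in ℂ^n (with the standard Hermitian inner product ⟨·,·⟩). Define the tensor-product vectors φ⊗ψ and ψ⊗φ in ℂ^{n×n} componentwise by (φ⊗ψ)(i,j) = φ(i)·ψ(j). Then ‖(1/2)(φ⊗ψ + ψ⊗φ)‖² = (1 + |⟨φ,ψ⟩|²)/2 and ‖(1/2)(φ⊗ψ − ψ⊗φ)‖² = (1 − |⟨φ,ψ⟩|²)/2. (These are respectively the probabilities of measuring outcome 0 and outcome 1 in the swap test applied to φ and ψ.) -/
open scoped InnerProductSpace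

/-! The two swap-test vectors are the normalised sum and difference of the unit vectors `φ ⊗ ψ`
and `ψ ⊗ φ`, so their squared norms are `(1 ± Re ⟪φ ⊗ ψ, ψ ⊗ φ⟫) / 2`. The inner product of
elementary tensors factors, `⟪a ⊗ b, c ⊗ d⟫ = ⟪a, c⟫ ⟪b, d⟫`, whence
`⟪φ ⊗ ψ, ψ ⊗ φ⟫ = ⟪φ, ψ⟫ ⟪ψ, φ⟫ = |⟪φ, ψ⟫|²`. -/

section UnitVectors

variable {𝕜 E : Type*} [RCLike 𝕜] [NormedAddCommGroup E] [InnerProductSpace 𝕜 E]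

lemma norm_half_smul_sq (x : E) : ‖(1 / 2 : 𝕜) • x‖ ^ 2 = ‖x‖ ^ 2 / 4 := by
  rw [norm_smul, mul_pow, norm_div, norm_one, RCLike.norm_ofNat]
  ring

lemma norm_half_smul_add_sq_of_norm_eq_one {x y : E} (hx : ‖x‖ = 1) (hy : ‖y‖ = 1) :
    ‖(1 / 2 : 𝕜) • (x + y)‖ ^ 2 = (1 + RCLike.re ⟪x, y⟫_𝕜) / 2 := by
  rw [norm_half_smul_sq, norm_add_sq (𝕜 := 𝕜), hx, hy]
  ring

lemma norm_half_smul_sub_sq_of_norm_eq_one {x y : E} (hx : ‖x‖ = 1) (hy : ‖y‖ = 1) :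
    ‖(1 / 2 : 𝕜) • (x - y)‖ ^ 2 = (1 - RCLike.re ⟪x, y⟫_𝕜) / 2 := by
  rw [norm_half_smul_sq, norm_sub_sq (𝕜 := 𝕜), hx, hy]
  ring

end UnitVectors

section ElementaryTensors

variable {𝕜 ι κ : Type*} [RCLike 𝕜] [Fintype ι] [Fintype κ]

lemma inner_eq_inner_mul_inner_of_apply_eq_mul {a c : EuclideanSpace 𝕜 ι}
    {b d : EuclideanSpace 𝕜 κ} {x y : EuclideanSpace 𝕜 (ι × κ)} (hx : ∀ p : ι × κ, x p = a p.1 * b p.2)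
    (hy : ∀ p : ι × κ, y p = c p.1 * d p.2) : ⟪x, y⟫_𝕜 = ⟪a, c⟫_𝕜 * ⟪b, d⟫_𝕜 := by
  simp only [PiLp.inner_apply, RCLike.inner_apply, hx, hy, Fintype.sum_prod_type,
    Finset.sum_mul_sum, map_mul]
  refine Finset.sum_congr rfl fun i _ => Finset.sum_congr rfl fun j _ => ?_
  ring

lemma norm_eq_norm_mul_norm_of_apply_eq_mul {a : EuclideanSpace 𝕜 ι} {b : EuclideanSpace 𝕜 κ}
    {x : EuclideanSpace 𝕜 (ι × κ)} (hx : ∀ p : ι × κ, x p = a p.1 * b p.2) :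
    ‖x‖ = ‖a‖ * ‖b‖ := by
  rw [← sq_eq_sq₀ (norm_nonneg x) (by positivity), mul_pow, ← RCLike.ofReal_inj (K := 𝕜)]
  push_cast
  rw [← inner_self_eq_norm_sq_to_K, ← inner_self_eq_norm_sq_to_K, ← inner_self_eq_norm_sq_to_K,
    inner_eq_inner_mul_inner_of_apply_eq_mul hx hx]

lemma re_inner_eq_norm_inner_sq_of_apply_eq_mul {a c : EuclideanSpace 𝕜 ι}
    {x y : EuclideanSpace 𝕜 (ι × ι)} (hx : ∀ p : ι × ι, x p = a p.1 * c p.2)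
    (hy : ∀ p : ι × ι, y p = c p.1 * a p.2) : RCLike.re ⟪x, y⟫_𝕜 = ‖⟪a, c⟫_𝕜‖ ^ 2 := by
  rw [inner_eq_inner_mul_inner_of_apply_eq_mul hx hy, inner_mul_symm_re_eq_norm, norm_mul,
    norm_inner_symm c a, sq]

end ElementaryTensors

/-- Swap-test probabilities: for unit vectors `φ, ψ ∈ ℂ^n`,
`‖(1/2)(φ⊗ψ + ψ⊗φ)‖² = (1 + |⟨φ,ψ⟩|²)/2` and `‖(1/2)(φ⊗ψ − ψ⊗φ)‖² = (1 − |⟨φ,ψ⟩|²)/2`. -/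
theorem stmt_2 (n : ℕ) (φ ψ : EuclideanSpace ℂ (Fin n))
    (hφ : ‖φ‖ = 1) (hψ : ‖ψ‖ = 1)
    (φψ ψφ : EuclideanSpace ℂ (Fin n × Fin n))
    (hφψ : ∀ p : Fin n × Fin n, φψ p = φ p.1 * ψ p.2)
    (hψφ : ∀ p : Fin n × Fin n, ψφ p = ψ p.1 * φ p.2) :
    ‖(1 / 2 : ℂ) • (φψ + ψφ)‖ ^ 2 = (1 + ‖⟪φ, ψ⟫_ℂ‖ ^ 2) / 2 ∧
    ‖(1 / 2 : ℂ) • (φψ - ψφ)‖ ^ 2 = (1 - ‖⟪φ, ψ⟫_ℂ‖ ^ 2) / 2 := by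
  have hφψ_unit : ‖φψ‖ = 1 := by
    rw [norm_eq_norm_mul_norm_of_apply_eq_mul hφψ, hφ, hψ, one_mul]
  have hψφ_unit : ‖ψφ‖ = 1 := by
    rw [norm_eq_norm_mul_norm_of_apply_eq_mul hψφ, hφ, hψ, one_mul]
  rw [norm_half_smul_add_sq_of_norm_eq_one hφψ_unit hψφ_unit,
    norm_half_smul_sub_sq_of_norm_eq_one hφψ_unit hψφ_unit,
    re_inner_eq_norm_inner_sq_of_apply_eq_mul hφψ hψφ]
  exact ⟨rfl, rfl⟩
end

section
/- Let N and d be positive integers, let u, v : Fin N → ℂ each have exactly d nonzero entries, and let r_u, r_v > 0 satisfy |u_i| ≤ r_u and |v_i| ≤ r_v for all i. Define ψ, φ : Fin N × Fin 2 × Fin 2 → ℂ by: ψ(i,0,1) = (1/√d)·√(1 − |v_i|²/r_v²)·conj(v_i)/|v_i| if v_i ≠ 0 (and 0 if v_i = 0), ψ(i,1,1) = (1/√d)·v_i/r_v, and ψ = 0 on all other components; φ(i,1,0) = (1/√d)·√(1 − |u_i|²/r_u²)·conj(u_i)/|u_i| if u_i ≠ 0 (and 0 if u_i = 0), φ(i,1,1)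 = (1/√d)·u_i/r_u, and φ = 0 on all other components. Then ‖ψ‖ = 1, ‖φ‖ = 1, and ⟨φ,ψ⟩ = ⟨u,v⟩/(d·r_u·r_v), where ⟨u,v⟩ = Σ_i conj(u_i)·v_i. -/
/-!
Each index `i` contributes two amplitudes to `ψ` (resp. `φ`): `v_i / (√d r_v)` and a companion of
modulus `√(1 - |v_i|²/r_v²) / √d`, so the block has squared norm `1/d` exactly when `v_i ≠ 0`;
with `d` nonzero entries the blocks add up to a unit vector. In `⟪φ, ψ⟫` the companions sit in
different coordinates, so only the `(i, 1, 1)` coordinates meet, giving `conj u_i · v_i / (d r_u r_v)`.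
-/

open scoped InnerProductSpace

open Finset

lemma norm_sq_completion_add_norm_sq {c r : ℝ} (hr : 0 < r) {z : ℂ} (hz : ‖z‖ ≤ r) :
    ‖(if z = 0 then 0 else (c : ℂ) * Real.sqrt (1 - ‖z‖ ^ 2 / r ^ 2) * starRingEnd ℂ z / ‖z‖)‖ ^ 2
      + ‖(c : ℂ) * z / r‖ ^ 2 = if z = 0 then 0 else c ^ 2 := by
  split_ifs with h
  · simp [h]
  have hz0 : 0 < ‖z‖ := norm_pos_iff.mpr h
  have hs : 0 ≤ 1 - ‖z‖ ^ 2 / r ^ 2 := by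
    rw [sub_nonneg, div_le_one (by positivity)]
    exact pow_le_pow_left₀ (norm_nonneg z) hz 2
  simp only [norm_div, norm_mul, Complex.norm_real, Complex.norm_conj, Real.norm_eq_abs,
    abs_of_nonneg (Real.sqrt_nonneg _), abs_of_pos hz0, abs_of_pos hr]
  rw [mul_div_assoc, div_self hz0.ne', mul_one, mul_pow, Real.sq_sqrt hs, div_pow, mul_pow]
  field_simp
  rw [sq_abs]
  ring

lemma EuclideanSpace.norm_eq_one_of_norm_sq_fiber {𝕜 ι κ M : Type*} [RCLike 𝕜] [Fintype ι]
    [Fintype κ] [Zero M] [DecidableEq M] (x : EuclideanSpace 𝕜 (ι × κ)) (w : ι → M) {d : ℕ}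
    (hd : 0 < d) (hw : #{i | w i ≠ 0} = d)
    (hx : ∀ i, ∑ k, ‖x (i, k)‖ ^ 2 = if w i = 0 then 0 else (d : ℝ)⁻¹) : ‖x‖ = 1 := by
  rw [← pow_eq_one_iff_of_nonneg (norm_nonneg x) two_ne_zero, EuclideanSpace.norm_sq_eq,
    Fintype.sum_prod_type]
  simp only [hx]
  rw [sum_ite, sum_const_zero, zero_add, sum_const, hw, nsmul_eq_mul]
  exact mul_inv_cancel₀ (by positivity)

theorem stmt_3_general (N d : ℕ) (hd : 0 < d) (u v : Fin N → ℂ)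
    (hud : (Finset.univ.filter fun i => u i ≠ 0).card = d)
    (hvd : (Finset.univ.filter fun i => v i ≠ 0).card = d)
    (ru rv : ℝ) (hru : 0 < ru) (hrv : 0 < rv)
    (hubd : ∀ i, ‖u i‖ ≤ ru) (hvbd : ∀ i, ‖v i‖ ≤ rv)
    (ψ φ : EuclideanSpace ℂ (Fin N × Fin 2 × Fin 2))
    (hψ01 : ∀ i, ψ (i, 0, 1) =
      if v i = 0 then 0 else
        ((Real.sqrt d)⁻¹ * Real.sqrt (1 - (‖v i‖) ^ 2 / rv ^ 2) : ℂ) *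
          starRingEnd ℂ (v i) / (‖v i‖ : ℂ))
    (hψ11 : ∀ i, ψ (i, 1, 1) = ((Real.sqrt d)⁻¹ : ℂ) * v i / (rv : ℂ))
    (hψ0 : ∀ i j, ψ (i, j, 0) = 0)
    (hφ10 : ∀ i, φ (i, 1, 0) =
      if u i = 0 then 0 else
        ((Real.sqrt d)⁻¹ * Real.sqrt (1 - (‖u i‖) ^ 2 / ru ^ 2) : ℂ) *
          starRingEnd ℂ (u i) / (‖u i‖ : ℂ))
    (hφ11 : ∀ i, φ (i, 1, 1) = ((Real.sqrt d)⁻¹ : ℂ) * u i / (ru : ℂ))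
    (hφ0 : ∀ i k, φ (i, 0, k) = 0) :
    ‖ψ‖ = 1 ∧ ‖φ‖ = 1 ∧
      ⟪φ, ψ⟫_ℂ = (∑ i, starRingEnd ℂ (u i) * v i) / ((d : ℂ) * (ru : ℂ) * (rv : ℂ)) := by
  refine ⟨?_, ?_, ?_⟩
  · refine EuclideanSpace.norm_eq_one_of_norm_sq_fiber ψ v hd hvd fun i => ?_
    simp only [Fintype.sum_prod_type, Fin.sum_univ_two, hψ0, hψ01, hψ11, norm_zero,
      zero_pow two_ne_zero, zero_add]
    rw [← Complex.ofReal_inv, norm_sq_completion_add_norm_sq hrv (hvbd i), inv_pow,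
      Real.sq_sqrt d.cast_nonneg]
  · refine EuclideanSpace.norm_eq_one_of_norm_sq_fiber φ u hd hud fun i => ?_
    simp only [Fintype.sum_prod_type, Fin.sum_univ_two, hφ0, hφ10, hφ11, norm_zero,
      zero_pow two_ne_zero, zero_add, add_zero]
    rw [← Complex.ofReal_inv, norm_sq_completion_add_norm_sq hru (hubd i), inv_pow,
      Real.sq_sqrt d.cast_nonneg]
  · have hsqrt : ((Real.sqrt d : ℂ))⁻¹ * ((Real.sqrt d : ℂ))⁻¹ = (d : ℂ)⁻¹ := by
      rw [← mul_inv, ← Complex.ofReal_mul, Real.mul_self_sqrt d.cast_nonneg,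
        Complex.ofReal_natCast]
    rw [PiLp.inner_apply, Fintype.sum_prod_type, sum_div]
    refine sum_congr rfl fun i _ => ?_
    simp only [Fintype.sum_prod_type, Fin.sum_univ_two, hφ0, hψ0, hφ11, hψ11, map_zero, zero_mul,
      zero_add, RCLike.inner_apply, map_div₀, map_mul, map_inv₀, Complex.conj_ofReal]
    rw [div_mul_div_comm, mul_mul_mul_comm, hsqrt]
    ring

/-- The states `ψ, φ` built from `d`-sparse vectors `v, u` are unit vectors whose inner
product is `⟨u,v⟩/(d·r_u·r_v)`. -/
theorem stmt_3 (N d : ℕ) (hN : 0 < N) (hd : 0 < d) (u v : Fin N → ℂ)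
    (hud : (Finset.univ.filter fun i => u i ≠ 0).card = d)
    (hvd : (Finset.univ.filter fun i => v i ≠ 0).card = d)
    (ru rv : ℝ) (hru : 0 < ru) (hrv : 0 < rv)
    (hubd : ∀ i, ‖u i‖ ≤ ru) (hvbd : ∀ i, ‖v i‖ ≤ rv)
    (ψ φ : EuclideanSpace ℂ (Fin N × Fin 2 × Fin 2))
    (hψ01 : ∀ i, ψ (i, 0, 1) =
      if v i = 0 then 0 else
        ((Real.sqrt d)⁻¹ * Real.sqrt (1 - (‖v i‖) ^ 2 / rv ^ 2) : ℂ) *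
          starRingEnd ℂ (v i) / (‖v i‖ : ℂ))
    (hψ11 : ∀ i, ψ (i, 1, 1) = ((Real.sqrt d)⁻¹ : ℂ) * v i / (rv : ℂ))
    (hψ0 : ∀ i j, ψ (i, j, 0) = 0)
    (hφ10 : ∀ i, φ (i, 1, 0) =
      if u i = 0 then 0 else
        ((Real.sqrt d)⁻¹ * Real.sqrt (1 - (‖u i‖) ^ 2 / ru ^ 2) : ℂ) *
          starRingEnd ℂ (u i) / (‖u i‖ : ℂ))
    (hφ11 : ∀ i, φ (i, 1, 1) = ((Real.sqrt d)⁻¹ : ℂ) * u i / (ru : ℂ))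
    (hφ0 : ∀ i k, φ (i, 0, k) = 0) :
    ‖ψ‖ = 1 ∧ ‖φ‖ = 1 ∧
      ⟪φ, ψ⟫_ℂ = (∑ i, starRingEnd ℂ (u i) * v i) / ((d : ℂ) * (ru : ℂ) * (rv : ℂ)) :=
  stmt_3_general N d hd u v hud hvd ru rv hru hrv hubd hvbd ψ φ hψ01 hψ11 hψ0 hφ10 hφ11 hφ0
end

section
/- Let N and d be positive integers, let u, v : Fin N → ℂ each have exactly d nonzero entries, and let r_u, r_v > 0 satisfy |u_i| ≤ r_u and |v_i| ≤ r_v for all i. Let ψ, φ : Fin N × Fin 2 × Fin 2 → ℂ be defined by: ψ(i,0,1) = (1/√d)·√(1 − |v_i|²/r_v²)·conj(v_i)/|v_i| if v_i ≠ 0 (and 0 if v_i = 0), ψ(i,1,1) = (1/√d)·v_i/r_v, ψ = 0 otherwise; φ(i,1,0) = (1/√d)·√(1 − |u_i|²/r_u²)·conj(u_i)/|u_i| if u_i ≠ 0 (and 0 if u_i = 0), φ(i,1,1) = (1/√d)·u_i/r_u, φ = 0 otherwise. Let P(0) = ‖(1/2)(φ⊗ψ + ψ⊗φ)‖² be the swap-test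 success probability, where (φ⊗ψ)(x,y) = φ(x)·ψ(y) componentwise. Then (2·P(0) − 1)·d²·r_u²·r_v² = |⟨u,v⟩|², where ⟨u,v⟩ = Σ_i conj(u_i)·v_i. -/
/-!
Each of the `d` nonzero coordinates of `v` contributes `1/d` to `‖ψ‖²`, split between the slot
`(i,0,1)` and the slot `(i,1,1)` (the square root is exactly what completes `|v_i/r_v|²` to `1`),
so `ψ` and likewise `φ` are unit vectors. The two states share only the slots `(i,1,1)`, whence
`⟪φ, ψ⟫ = ⟪u, v⟫ / (d r_u r_v)`. Finally, for unit vectors the symmetrised tensor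
`(φ ⊗ ψ + ψ ⊗ φ)/2` has squared norm `(1 + |⟪φ, ψ⟫|²)/2`.
-/

open scoped InnerProductSpace ComplexConjugate

section Tensor

variable {𝕜 : Type*} [RCLike 𝕜] {ι κ : Type*} [Fintype ι] [Fintype κ]

theorem inner_eq_mul_inner_of_tensor {a c : EuclideanSpace 𝕜 ι} {b e : EuclideanSpace 𝕜 κ}
    {ab ce : EuclideanSpace 𝕜 (ι × κ)} (hab : ∀ x y, ab (x, y) = a x * b y)
    (hce : ∀ x y, ce (x, y) = c x * e y) : ⟪ab, ce⟫_𝕜 = ⟪a, c⟫_𝕜 * ⟪b, e⟫_𝕜 := by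
  simp only [PiLp.inner_apply, RCLike.inner_apply', Finset.sum_mul_sum, Fintype.sum_prod_type,
    hab, hce, map_mul]
  exact Finset.sum_congr rfl fun x _ => Finset.sum_congr rfl fun y _ => by ring

theorem norm_sq_half_smul_add_swap {a b : EuclideanSpace 𝕜 ι} (ha : ‖a‖ = 1) (hb : ‖b‖ = 1)
    {ab ba : EuclideanSpace 𝕜 (ι × ι)} (hab : ∀ x y, ab (x, y) = a x * b y)
    (hba : ∀ x y, ba (x, y) = b x * a y) :
    ‖(1 / 2 : 𝕜) • (ab + ba)‖ ^ 2 = (1 + ‖⟪a, b⟫_𝕜‖ ^ 2) / 2 := by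
  have hsum : ⟪ab + ba, ab + ba⟫_𝕜 = 2 * (1 + (‖⟪a, b⟫_𝕜‖ : 𝕜) ^ 2) := by
    rw [inner_add_left, inner_add_right, inner_add_right, inner_eq_mul_inner_of_tensor hab hab,
      inner_eq_mul_inner_of_tensor hab hba, inner_eq_mul_inner_of_tensor hba hab,
      inner_eq_mul_inner_of_tensor hba hba, ← inner_conj_symm b a, RCLike.mul_conj,
      RCLike.conj_mul, inner_self_eq_norm_sq_to_K, inner_self_eq_norm_sq_to_K, ha, hb,
      RCLike.ofReal_one]
    ring
  rw [norm_smul, mul_pow, norm_sq_eq_re_inner (𝕜 := 𝕜) (ab + ba), hsum]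
  simp only [one_div, norm_inv, RCLike.norm_ofNat, inv_pow, RCLike.mul_re, RCLike.ofNat_re,
    map_add, RCLike.one_re, RCLike.re_ofReal_pow, RCLike.ofNat_im, RCLike.one_im,
    RCLike.im_ofReal_pow, add_zero, mul_zero, sub_zero]
  ring

end Tensor

theorem norm_sq_amplitudes_eq {t r : ℝ} (ht : 0 ≤ t) (hr : 0 < r) {z : ℂ} (hz : ‖z‖ ≤ r) :
    ‖if z = 0 then 0 else
        ((Real.sqrt t)⁻¹ * Real.sqrt (1 - ‖z‖ ^ 2 / r ^ 2) : ℂ) * conj z / (‖z‖ : ℂ)‖ ^ 2 +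
      ‖((Real.sqrt t)⁻¹ : ℂ) * z / (r : ℂ)‖ ^ 2 = if z = 0 then 0 else t⁻¹ := by
  split_ifs with h
  · simp [h]
  · have hz0 : 0 < ‖z‖ := norm_pos_iff.2 h
    have hle : ‖z‖ ^ 2 / r ^ 2 ≤ 1 := div_le_one_of_le₀ (by gcongr) (by positivity)
    simp only [norm_div, norm_mul, norm_inv, Complex.norm_real, Complex.norm_conj,
      Real.norm_eq_abs, abs_of_pos hr, abs_of_pos hz0, abs_of_nonneg (Real.sqrt_nonneg _)]
    simp only [div_pow, mul_pow, inv_pow, Real.sq_sqrt ht, Real.sq_sqrt (sub_nonneg.2 hle)]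
    field_simp
    ring

theorem norm_eq_one_of_block_norm_sq {𝕜 ι κ M : Type*} [RCLike 𝕜] [Fintype ι] [Fintype κ]
    [Zero M] [DecidableEq M] {w : EuclideanSpace 𝕜 (ι × κ)} {z : ι → M} {d : ℕ} (hd : 0 < d)
    (hz : (Finset.univ.filter fun i => z i ≠ 0).card = d)
    (hw : ∀ i, ∑ k, ‖w (i, k)‖ ^ 2 = if z i = 0 then 0 else (d : ℝ)⁻¹) : ‖w‖ = 1 := by
  have hsq : ‖w‖ ^ 2 = 1 := by
    rw [EuclideanSpace.norm_sq_eq, Fintype.sum_prod_type]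
    simp only [hw, Finset.sum_ite, Finset.sum_const_zero, zero_add, Finset.sum_const, hz,
      nsmul_eq_mul]
    exact mul_inv_cancel₀ (by positivity)
  exact (pow_eq_one_iff_of_nonneg (norm_nonneg w) two_ne_zero).1 hsq

theorem stmt_4_general (N d : ℕ) (hd : 0 < d) (u v : Fin N → ℂ)
    (hud : (Finset.univ.filter fun i => u i ≠ 0).card = d)
    (hvd : (Finset.univ.filter fun i => v i ≠ 0).card = d)
    (ru rv : ℝ) (hru : 0 < ru) (hrv : 0 < rv)
    (hubd : ∀ i, ‖u i‖ ≤ ru) (hvbd : ∀ i, ‖v i‖ ≤ rv)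
    (ψ φ : EuclideanSpace ℂ (Fin N × Fin 2 × Fin 2))
    (hψ01 : ∀ i, ψ (i, 0, 1) =
      if v i = 0 then 0 else
        ((Real.sqrt d)⁻¹ * Real.sqrt (1 - (‖v i‖) ^ 2 / rv ^ 2) : ℂ) *
          starRingEnd ℂ (v i) / (‖v i‖ : ℂ))
    (hψ11 : ∀ i, ψ (i, 1, 1) = ((Real.sqrt d)⁻¹ : ℂ) * v i / (rv : ℂ))
    (hψ0 : ∀ i j, ψ (i, j, 0) = 0)
    (hφ10 : ∀ i, φ (i, 1, 0) =
      if u i = 0 then 0 else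
        ((Real.sqrt d)⁻¹ * Real.sqrt (1 - (‖u i‖) ^ 2 / ru ^ 2) : ℂ) *
          starRingEnd ℂ (u i) / (‖u i‖ : ℂ))
    (hφ11 : ∀ i, φ (i, 1, 1) = ((Real.sqrt d)⁻¹ : ℂ) * u i / (ru : ℂ))
    (hφ0 : ∀ i k, φ (i, 0, k) = 0)
    (φψ ψφ : EuclideanSpace ℂ ((Fin N × Fin 2 × Fin 2) × (Fin N × Fin 2 × Fin 2)))
    (hφψ : ∀ x y, φψ (x, y) = φ x * ψ y)
    (hψφ : ∀ x y, ψφ (x, y) = ψ x * φ y)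
    (P0 : ℝ) (hP0 : P0 = ‖(1 / 2 : ℂ) • (φψ + ψφ)‖ ^ 2) :
    (2 * P0 - 1) * (d : ℝ) ^ 2 * ru ^ 2 * rv ^ 2 =
      (‖∑ i, starRingEnd ℂ (u i) * v i‖) ^ 2 := by
  have hψ : ‖ψ‖ = 1 := norm_eq_one_of_block_norm_sq hd hvd fun i => by
    simp only [Fintype.sum_prod_type, Fin.sum_univ_two, hψ0, hψ01, hψ11, norm_zero]
    simpa using norm_sq_amplitudes_eq d.cast_nonneg hrv (hvbd i)
  have hφ : ‖φ‖ = 1 := norm_eq_one_of_block_norm_sq hd hud fun i => by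
    simp only [Fintype.sum_prod_type, Fin.sum_univ_two, hφ0, hφ10, hφ11, norm_zero]
    simpa using norm_sq_amplitudes_eq d.cast_nonneg hru (hubd i)
  have hoverlap : ⟪φ, ψ⟫_ℂ = (∑ i, conj (u i) * v i) / (d * ru * rv) := by
    simp only [PiLp.inner_apply, RCLike.inner_apply', Fintype.sum_prod_type, Fin.sum_univ_two,
      hφ0, hψ0, hφ11, hψ11, map_zero, zero_mul, mul_zero, zero_add, Finset.sum_div]
    refine Finset.sum_congr rfl fun i _ => ?_
    have hsqrt : ((Real.sqrt d : ℂ))⁻¹ * (Real.sqrt d : ℂ)⁻¹ = (d : ℂ)⁻¹ := by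
      rw [← mul_inv, ← Complex.ofReal_mul, Real.mul_self_sqrt d.cast_nonneg,
        Complex.ofReal_natCast]
    simp only [map_div₀, map_mul, map_inv₀, Complex.conj_ofReal]
    rw [div_mul_div_comm, mul_mul_mul_comm, hsqrt]
    field_simp
  rw [hP0, norm_sq_half_smul_add_swap hφ hψ hφψ hψφ, hoverlap, norm_div]
  simp only [norm_mul, Complex.norm_real, Complex.norm_natCast, Real.norm_eq_abs, abs_of_pos hru,
    abs_of_pos hrv]
  field_simp
  ring

/-- The swap-test success probability `P(0)` on the states `ψ, φ` built from `d`-sparse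
vectors `v, u` recovers the squared inner product: `(2·P(0) − 1)·d²·r_u²·r_v² = |⟨u,v⟩|²`. -/
theorem stmt_4 (N d : ℕ) (hN : 0 < N) (hd : 0 < d) (u v : Fin N → ℂ)
    (hud : (Finset.univ.filter fun i => u i ≠ 0).card = d)
    (hvd : (Finset.univ.filter fun i => v i ≠ 0).card = d)
    (ru rv : ℝ) (hru : 0 < ru) (hrv : 0 < rv)
    (hubd : ∀ i, ‖u i‖ ≤ ru) (hvbd : ∀ i, ‖v i‖ ≤ rv)
    (ψ φ : EuclideanSpace ℂ (Fin N × Fin 2 × Fin 2))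
    (hψ01 : ∀ i, ψ (i, 0, 1) =
      if v i = 0 then 0 else
        ((Real.sqrt d)⁻¹ * Real.sqrt (1 - (‖v i‖) ^ 2 / rv ^ 2) : ℂ) *
          starRingEnd ℂ (v i) / (‖v i‖ : ℂ))
    (hψ11 : ∀ i, ψ (i, 1, 1) = ((Real.sqrt d)⁻¹ : ℂ) * v i / (rv : ℂ))
    (hψ0 : ∀ i j, ψ (i, j, 0) = 0)
    (hφ10 : ∀ i, φ (i, 1, 0) =
      if u i = 0 then 0 else
        ((Real.sqrt d)⁻¹ * Real.sqrt (1 - (‖u i‖) ^ 2 / ru ^ 2) : ℂ) *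
          starRingEnd ℂ (u i) / (‖u i‖ : ℂ))
    (hφ11 : ∀ i, φ (i, 1, 1) = ((Real.sqrt d)⁻¹ : ℂ) * u i / (ru : ℂ))
    (hφ0 : ∀ i k, φ (i, 0, k) = 0)
    (φψ ψφ : EuclideanSpace ℂ ((Fin N × Fin 2 × Fin 2) × (Fin N × Fin 2 × Fin 2)))
    (hφψ : ∀ x y, φψ (x, y) = φ x * ψ y)
    (hψφ : ∀ x y, ψφ (x, y) = ψ x * φ y)
    (P0 : ℝ) (hP0 : P0 = ‖(1 / 2 : ℂ) • (φψ + ψφ)‖ ^ 2) :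
    (2 * P0 - 1) * (d : ℝ) ^ 2 * ru ^ 2 * rv ^ 2 =
      (‖∑ i, starRingEnd ℂ (u i) * v i‖) ^ 2 :=
  stmt_4_general N d hd u v hud hvd ru rv hru hrv hubd hvbd ψ φ hψ01 hψ11 hψ0 hφ10 hφ11 hφ0 φψ ψφ
    hφψ hψφ P0 hP0
end

section
/- Let k be a positive integer and let a be a real number with 1/2 < a ≤ 1. Then the lower binomial tail satisfies Σ_{p=0}^{⌊k/2⌋} C(k,p)·a^p·(1−a)^{k−p} ≤ exp(−2k(a − 1/2)²), where C(k,p) is the binomial coefficient. -/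
/-- Hoeffding-type bound on the lower binomial tail: for `1/2 < a ≤ 1` and `k ≥ 1`,
`Σ_{p=0}^{⌊k/2⌋} C(k,p)·a^p·(1−a)^{k−p} ≤ exp(−2k(a − 1/2)²)`. -/
theorem stmt_5 (k : ℕ) (hk : 0 < k) (a : ℝ) (ha : 1 / 2 < a) (ha1 : a ≤ 1) :
    ∑ p ∈ Finset.range (k / 2 + 1), (k.choose p : ℝ) * a ^ p * (1 - a) ^ (k - p) ≤
      Real.exp (-2 * k * (a - 1 / 2) ^ 2) := by
  set m := k / 2 with hm
  set r := k % 2 with hr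
  set b := 1 - a with hbdef
  have hb0 : 0 ≤ b := by simp only [hbdef]; linarith
  have hba : b ≤ a := by simp only [hbdef]; linarith
  have ha0 : 0 ≤ a := by linarith
  have hmk : m ≤ k := Nat.div_le_self k 2
  have hkmr : k = 2 * m + r := by omega
  have hkm : k - m = m + r := by omega
  -- Step 1: bound each term
  have step1 : ∑ p ∈ Finset.range (m + 1), (k.choose p : ℝ) * a ^ p * b ^ (k - p) ≤
      (∑ p ∈ Finset.range (m + 1), (k.choose p : ℝ)) * (a ^ m * b ^ (k - m)) := by
    rw [Finset.sum_mul]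
    apply Finset.sum_le_sum
    intro p hp
    have hpm : p ≤ m := Nat.lt_succ_iff.mp (Finset.mem_range.mp hp)
    have hterm : a ^ p * b ^ (k - p) ≤ a ^ m * b ^ (k - m) := by
      have h1 : k - p = (m - p) + (k - m) := by omega
      have h2 : b ^ (m - p) ≤ a ^ (m - p) := pow_le_pow_left₀ hb0 hba _
      calc a ^ p * b ^ (k - p) = a ^ p * b ^ (m - p) * b ^ (k - m) := by
            rw [h1, pow_add]; ring
        _ ≤ a ^ p * a ^ (m - p) * b ^ (k - m) := by
            apply mul_le_mul_of_nonneg_right _ (pow_nonneg hb0 _)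
            exact mul_le_mul_of_nonneg_left h2 (pow_nonneg ha0 _)
        _ = a ^ m * b ^ (k - m) := by rw [← pow_add, Nat.add_sub_cancel' hpm]
    calc (k.choose p : ℝ) * a ^ p * b ^ (k - p)
        = (k.choose p : ℝ) * (a ^ p * b ^ (k - p)) := by ring
      _ ≤ (k.choose p : ℝ) * (a ^ m * b ^ (k - m)) := by
          exact mul_le_mul_of_nonneg_left hterm (by positivity)
  -- Step 2: binomial sum bound
  have step2 : (∑ p ∈ Finset.range (m + 1), (k.choose p : ℝ)) ≤ 2 ^ k := by
    have h1 : (∑ p ∈ Finset.range (m + 1), k.choose p) ≤ ∑ p ∈ Finset.range (k + 1), k.choose p :=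
      Finset.sum_le_sum_of_subset (Finset.range_subset_range.mpr (by omega))
    rw [Nat.sum_range_choose] at h1
    calc (∑ p ∈ Finset.range (m + 1), (k.choose p : ℝ))
        = ((∑ p ∈ Finset.range (m + 1), k.choose p : ℕ) : ℝ) := by push_cast; ring
      _ ≤ ((2 ^ k : ℕ) : ℝ) := by exact_mod_cast h1
      _ = 2 ^ k := by push_cast; ring
  -- Step 3: rewrite
  have step3 : (2 : ℝ) ^ k * (a ^ m * b ^ (k - m)) = (4 * (a * b)) ^ m * (2 * b) ^ r := by
    rw [hkm]; nth_rewrite 1 [hkmr]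
    rw [pow_add, pow_mul, pow_add, mul_pow, mul_pow, mul_pow]
    norm_num; ring
  -- key exponential bounds
  have h4 : 4 * (a * b) ≤ Real.exp (-(4 * (a - 1 / 2) ^ 2)) := by
    have := Real.add_one_le_exp (-(4 * (a - 1 / 2) ^ 2))
    nlinarith [this]
  have h4n : 0 ≤ 4 * (a * b) := by positivity
  have h2 : 2 * b ≤ Real.exp (-(2 * (a - 1 / 2) ^ 2)) := by
    calc 2 * b ≤ Real.exp (-(2 * (a - 1 / 2))) := by
          have := Real.add_one_le_exp (-(2 * (a - 1 / 2)))
          simp only [hbdef]; linarith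
      _ ≤ Real.exp (-(2 * (a - 1 / 2) ^ 2)) := by
          apply Real.exp_le_exp.mpr; nlinarith
  have h2n : 0 ≤ 2 * b := by positivity
  -- combine
  have step4 : (4 * (a * b)) ^ m * (2 * b) ^ r ≤
      Real.exp (-(4 * (a - 1 / 2) ^ 2)) ^ m * Real.exp (-(2 * (a - 1 / 2) ^ 2)) ^ r := by
    apply mul_le_mul (pow_le_pow_left₀ h4n h4 m) (pow_le_pow_left₀ h2n h2 r)
      (pow_nonneg h2n r) (pow_nonneg (Real.exp_nonneg _) m)
  have step5 : Real.exp (-(4 * (a - 1 / 2) ^ 2)) ^ m * Real.exp (-(2 * (a - 1 / 2) ^ 2)) ^ r =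
      Real.exp (-2 * k * (a - 1 / 2) ^ 2) := by
    rw [← Real.exp_nat_mul, ← Real.exp_nat_mul, ← Real.exp_add]
    congr 1
    have : (k : ℝ) = 2 * m + r := by exact_mod_cast hkmr
    rw [this]; ring
  calc ∑ p ∈ Finset.range (m + 1), (k.choose p : ℝ) * a ^ p * b ^ (k - p)
      ≤ (∑ p ∈ Finset.range (m + 1), (k.choose p : ℝ)) * (a ^ m * b ^ (k - m)) := step1
    _ ≤ (2 : ℝ) ^ k * (a ^ m * b ^ (k - m)) := by
        apply mul_le_mul_of_nonneg_right step2 (by positivity)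
    _ = (4 * (a * b)) ^ m * (2 * b) ^ r := step3
    _ ≤ _ := step4
    _ = Real.exp (-2 * k * (a - 1 / 2) ^ 2) := step5
end

section
/- Let M and N be positive integers, let V be a unitary (M+1)×(M+1) complex matrix, and let v_0, v_1, …, v_M : Fin N → ℂ be unit vectors. Define Ψ : Fin (M+1) × Fin N → ℂ by Ψ(q,n) = Σ_{j=0}^{M} conj(V_{jq})·V_{j0}·v_j(n). Then Σ_{q,n} |Ψ(q,n)|² = 1, and Σ_{n} |Ψ(0,n)|² = ‖Σ_{j=0}^{M} |V_{j0}|²·v_j‖², where the norm is the Euclidean norm on Fin N → ℂ. (That is, the probability of measuring outcome 0 on the first register of the state (V†⊗I)·U·(V⊗I)|0⟩|0⟩, where U|j⟩|0⟩ = |j⟩|v_j⟩, equals ‖Σ_j |V_{j0}|² v_j‖².) -/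
/-!
Ψ, read as a matrix, is `Vᴴ * A` with `A j n = V j 0 * v j n`. Left multiplication by a unitary
matrix preserves the sum of squared moduli of the entries, and that sum for `A` is
`∑ j, |V j 0|² ‖v j‖² = ∑ j, |V j 0|² = 1`. For `q = 0` the coefficients `conj (V j 0) * V j 0`
are `|V j 0|²`, so `Ψ (0, ·)` is the vector `∑ j, |V j 0|² v j`.
-/

namespace Matrix

open Finset

variable {𝕜 n : Type*} [RCLike 𝕜] [Fintype n] [DecidableEq n] {U : Matrix n n 𝕜}

theorem sum_norm_sq_mulVec_of_mem_unitaryGroup (hU : U ∈ unitaryGroup n 𝕜) (x : n → 𝕜) :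
    ∑ i, ‖(U *ᵥ x) i‖ ^ 2 = ∑ i, ‖x i‖ ^ 2 := by
  have hT : toEuclideanCLM (𝕜 := 𝕜) U ∈ unitary _ := Unitary.map_mem _ hU
  have := congrArg (· ^ 2) (ContinuousLinearMap.norm_map_of_mem_unitary hT (WithLp.toLp 2 x))
  simpa only [toEuclideanCLM_toLp, EuclideanSpace.norm_sq_eq] using this

theorem sum_norm_sq_col_of_mem_unitaryGroup (hU : U ∈ unitaryGroup n 𝕜) (j : n) :
    ∑ i, ‖U i j‖ ^ 2 = 1 := by
  simpa [mulVec_single_one, Pi.single_apply, apply_ite] using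
    sum_norm_sq_mulVec_of_mem_unitaryGroup hU (Pi.single j 1)

theorem sum_norm_sq_mul_of_mem_unitaryGroup {κ : Type*} [Fintype κ] (hU : U ∈ unitaryGroup n 𝕜)
    (A : Matrix n κ 𝕜) : ∑ i, ∑ k, ‖(U * A) i k‖ ^ 2 = ∑ i, ∑ k, ‖A i k‖ ^ 2 := by
  rw [sum_comm, sum_comm (f := fun i k => ‖A i k‖ ^ 2)]
  exact sum_congr rfl fun k _ => by
    simpa [mulVec, dotProduct, mul_apply] using sum_norm_sq_mulVec_of_mem_unitaryGroup hU (A.col k)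

end Matrix

theorem stmt_7_general (M N : ℕ)
    (V : Matrix (Fin (M + 1)) (Fin (M + 1)) ℂ)
    (hV : V ∈ Matrix.unitaryGroup (Fin (M + 1)) ℂ)
    (v : Fin (M + 1) → EuclideanSpace ℂ (Fin N)) (hv : ∀ j, ‖v j‖ = 1)
    (Ψ : EuclideanSpace ℂ (Fin (M + 1) × Fin N))
    (hΨ : ∀ q n, Ψ (q, n) = ∑ j, starRingEnd ℂ (V j q) * V j 0 * v j n) :
    (∑ q, ∑ n, ‖Ψ (q, n)‖ ^ 2) = 1 ∧
    (∑ n, ‖Ψ (0, n)‖ ^ 2) =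
      ‖∑ j, ((‖V j 0‖ ^ 2 : ℝ) : ℂ) • v j‖ ^ 2 := by
  set A : Matrix (Fin (M + 1)) (Fin N) ℂ := Matrix.of fun j n => V j 0 * v j n
  have hΨA : ∀ q n, Ψ (q, n) = (star V * A) q n := fun q n => by
    simp [hΨ, A, Matrix.mul_apply, mul_assoc]
  have hconj : ∀ j, starRingEnd ℂ (V j 0) * V j 0 = ((‖V j 0‖ ^ 2 : ℝ) : ℂ) := fun j => by
    rw [mul_comm, Complex.mul_conj, Complex.normSq_eq_norm_sq]
  constructor
  · calc ∑ q, ∑ n, ‖Ψ (q, n)‖ ^ 2 = ∑ j, ∑ n, ‖A j n‖ ^ 2 := by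
          simp only [hΨA]
          exact Matrix.sum_norm_sq_mul_of_mem_unitaryGroup (Unitary.star_mem hV) A
      _ = ∑ j, ‖V j 0‖ ^ 2 * ‖v j‖ ^ 2 := by
          simp [A, EuclideanSpace.norm_sq_eq, mul_pow, Finset.mul_sum]
      _ = 1 := by simp [hv, Matrix.sum_norm_sq_col_of_mem_unitaryGroup hV]
  · simp [EuclideanSpace.norm_sq_eq, hΨ, hconj]

/-- For a unitary `V` and unit vectors `v_0, …, v_M`, the state
`Ψ(q,n) = Σ_j conj(V_{jq})·V_{j0}·v_j(n)` is normalized, and the probability of outcome `0`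
on the first register equals `‖Σ_j |V_{j0}|²·v_j‖²`. -/
theorem stmt_7 (M N : ℕ) (hM : 0 < M) (hN : 0 < N)
    (V : Matrix (Fin (M + 1)) (Fin (M + 1)) ℂ)
    (hV : V ∈ Matrix.unitaryGroup (Fin (M + 1)) ℂ)
    (v : Fin (M + 1) → EuclideanSpace ℂ (Fin N)) (hv : ∀ j, ‖v j‖ = 1)
    (Ψ : EuclideanSpace ℂ (Fin (M + 1) × Fin N))
    (hΨ : ∀ q n, Ψ (q, n) = ∑ j, starRingEnd ℂ (V j q) * V j 0 * v j n) :
    (∑ q, ∑ n, ‖Ψ (q, n)‖ ^ 2) = 1 ∧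
    (∑ n, ‖Ψ (0, n)‖ ^ 2) =
      ‖∑ j, ((‖V j 0‖ ^ 2 : ℝ) : ℂ) • v j‖ ^ 2 :=
  stmt_7_general M N V hV v hv Ψ hΨ
end

section
/- Let M and N be positive integers, let u, v_1, …, v_M : Fin N → ℂ be unit vectors, and set v_0 = −u. Let V be a unitary (M+1)×(M+1) complex matrix whose first column satisfies |V_{00}|² = 1/2 and |V_{j0}|² = 1/(2M) for all j ≥ 1. Define Ψ : Fin (M+1) × Fin N → ℂ by Ψ(q,n) = Σ_{j=0}^{M} conj(V_{jq})·V_{j0}·v_j(n). Then the probability of measuring outcome 0 on the first register, P(0) = Σ_{n} |Ψ(0,n)|², satisfies ‖u − (1/M)·Σ_{j=1}^{M} v_j‖² = 4·P(0). That is, the squared Euclidean distance from u to the centroid of v_1,…,v_M equals four times the success probability. -/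
/-! Row 0 of the circuit's output is `Ψ(0, ·) = ∑ⱼ |V_{j0}|² vⱼ`, and with the prescribed
weights `1/2` on `v₀ = -u` and `1/(2M)` on the others this is `-(u - centroid)/2`. Taking
squared norms gives the factor `4`. -/

open ComplexConjugate

lemma weighted_sum_eq_neg_half_smul_sub_centroid {K E : Type*} [Field K] [AddCommGroup E]
    [Module K E] (M : ℕ) (u : E) (v : Fin (M + 1) → E) (hv0 : v 0 = -u)
    (w : Fin (M + 1) → K) (hw0 : w 0 = 1 / 2) (hw : ∀ j : Fin M, w j.succ = 1 / (2 * M)) :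
    ∑ j, w j • v j = -(1 / 2 : K) • (u - (M : K)⁻¹ • ∑ j : Fin M, v j.succ) := by
  have hw' : ∀ j : Fin M, w j.succ = (1 / 2 : K) * (M : K)⁻¹ := fun j => by
    rw [hw j, one_div, one_div, mul_inv]
  simp only [Fin.sum_univ_succ, hv0, hw0, hw', mul_smul, ← Finset.smul_sum]
  module

lemma amplitude_diag_eq_sum_norm_sq_smul {M N : ℕ} (V : Matrix (Fin M) (Fin M) ℂ) (i : Fin M)
    (v : Fin M → EuclideanSpace ℂ (Fin N)) (Ψ : EuclideanSpace ℂ (Fin M × Fin N))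
    (hΨ : ∀ n, Ψ (i, n) = ∑ j, conj (V j i) * V j i * v j n) (n : Fin N) :
    Ψ (i, n) = (∑ j, ((‖V j i‖ ^ 2 : ℝ) : ℂ) • v j) n := by
  simp [hΨ, Complex.conj_mul']

theorem stmt_8_general (M N : ℕ)
    (u : EuclideanSpace ℂ (Fin N))
    (v : Fin (M + 1) → EuclideanSpace ℂ (Fin N))
    (hv0 : v 0 = -u)
    (V : Matrix (Fin (M + 1)) (Fin (M + 1)) ℂ)
    (hV00 : ‖V 0 0‖ ^ 2 = 1 / 2)
    (hVj0 : ∀ j : Fin (M + 1), j ≠ 0 → ‖V j 0‖ ^ 2 = 1 / (2 * M))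
    (Ψ : EuclideanSpace ℂ (Fin (M + 1) × Fin N))
    (hΨ : ∀ q n, Ψ (q, n) = ∑ j, starRingEnd ℂ (V j q) * V j 0 * v j n) :
    ‖u - ((M : ℂ))⁻¹ • ∑ j : Fin M, v j.succ‖ ^ 2 =
      4 * ∑ n, ‖Ψ (0, n)‖ ^ 2 := by
  have hdiff : u - ((M : ℂ))⁻¹ • ∑ j : Fin M, v j.succ =
      (-2 : ℂ) • ∑ j, ((‖V j 0‖ ^ 2 : ℝ) : ℂ) • v j := by
    rw [weighted_sum_eq_neg_half_smul_sub_centroid M u v hv0 _ ?_ ?_, smul_smul]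
    · norm_num
    · simp [hV00]
    · intro j
      simp [hVj0 j.succ j.succ_ne_zero]
  simp only [hdiff, norm_smul, mul_pow, EuclideanSpace.norm_sq_eq,
    amplitude_diag_eq_sum_norm_sq_smul V 0 v Ψ (hΨ 0)]
  norm_num

/-- Euclidean-distance circuit: with `v_0 = −u` and `|V_{00}|² = 1/2`, `|V_{j0}|² = 1/(2M)`
for `j ≥ 1`, the squared distance from `u` to the centroid of `v_1,…,v_M` equals `4·P(0)`. -/
theorem stmt_8 (M N : ℕ) (hM : 0 < M) (hN : 0 < N)
    (u : EuclideanSpace ℂ (Fin N)) (hu : ‖u‖ = 1)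
    (v : Fin (M + 1) → EuclideanSpace ℂ (Fin N))
    (hv0 : v 0 = -u) (hv : ∀ j : Fin (M + 1), j ≠ 0 → ‖v j‖ = 1)
    (V : Matrix (Fin (M + 1)) (Fin (M + 1)) ℂ)
    (hV : V ∈ Matrix.unitaryGroup (Fin (M + 1)) ℂ)
    (hV00 : ‖V 0 0‖ ^ 2 = 1 / 2)
    (hVj0 : ∀ j : Fin (M + 1), j ≠ 0 → ‖V j 0‖ ^ 2 = 1 / (2 * M))
    (Ψ : EuclideanSpace ℂ (Fin (M + 1) × Fin N))
    (hΨ : ∀ q n, Ψ (q, n) = ∑ j, starRingEnd ℂ (V j q) * V j 0 * v j n) :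
    ‖u - ((M : ℂ))⁻¹ • ∑ j : Fin M, v j.succ‖ ^ 2 =
      4 * ∑ n, ‖Ψ (0, n)‖ ^ 2 :=
  stmt_8_general M N u v hv0 V hV00 hVj0 Ψ hΨ
end

section
/- Let a, b, α, β, σ_A, σ_B, ξ_A, ξ_B be positive real numbers and let P_A and P_B be real numbers satisfying a·σ_A²/ξ_A² ≤ P_A ≤ α·σ_A²/ξ_A² and b·σ_B²/ξ_B² ≤ P_B ≤ β·σ_B²/ξ_B². If a ≥ β and the normalized-distance test assigns the point to cluster A, i.e. ξ_A/σ_A < ξ_B/σ_B, then the likelihood ratio test also assigns it to A, i.e. P_A > P_B. -/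
/-- If `a ≥ β` and the normalized-distance test assigns the test point to cluster `A`
(`ξ_A/σ_A < ξ_B/σ_B`), then the likelihood ratio test also assigns it to `A` (`P_A > P_B`). -/
theorem stmt_10 (a b α β σA σB ξA ξB : ℝ)
    (ha : 0 < a) (hb : 0 < b) (hα : 0 < α) (hβ : 0 < β)
    (hσA : 0 < σA) (hσB : 0 < σB) (hξA : 0 < ξA) (hξB : 0 < ξB)
    (PA PB : ℝ)
    (hPA1 : a * σA ^ 2 / ξA ^ 2 ≤ PA) (hPA2 : PA ≤ α * σA ^ 2 / ξA ^ 2)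
    (hPB1 : b * σB ^ 2 / ξB ^ 2 ≤ PB) (hPB2 : PB ≤ β * σB ^ 2 / ξB ^ 2)
    (haβ : β ≤ a) (hassign : ξA / σA < ξB / σB) :
    PB < PA := by
  rw [div_lt_div_iff₀ hσA hσB] at hassign
  have key : a * σB ^ 2 / ξB ^ 2 < a * σA ^ 2 / ξA ^ 2 := by
    rw [div_lt_div_iff₀ (by positivity) (by positivity)]
    have h2 : (ξA*σB)^2 < (ξB*σA)^2 := by
      apply pow_lt_pow_left₀ hassign (by positivity) (by norm_num)
    nlinarith [h2]
  calc PB ≤ β * σB ^ 2 / ξB ^ 2 := hPB2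
    _ ≤ a * σB ^ 2 / ξB ^ 2 := by gcongr
    _ < a * σA ^ 2 / ξA ^ 2 := key
    _ ≤ PA := hPA1
end
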